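/- If the formula ϑ(x̄,ȳ) exemplifies SOP₂ in T, then ϑ(x̄,ȳ) exemplifies SOP₂'' in T. -/

import Mathlib

/-!
Take `n = 1` and `λ = ℵ₀`. Then `2^{<λ}` is `2^{<ω}`, so the SOP₂ tree itself, read through
the identification of `2^{<ω}` with finite boolean lists, is the required family: branches of
`2^ω` stay consistent, and for (b) it suffices that the images of the two incomparable nodes
`⟨0⟩` and `⟨1⟩` of `m^{≤1}` are incomparable, which makes the two instances inconsistent.
-/

open Classical FirstOrder FirstOrder.Language Cardinal

namespace SopPaper

/-- An element of `2^{<λ}`: a sequence of zeroes and ones of some ordinal length `< λ`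
(with value `false` beyond its length, to make the representation canonical). -/
structure BSeq (lam : Cardinal.{0}) where
  len : Ordinal.{0}
  len_lt : len < lam.ord
  val : Ordinal.{0} → Bool
  val_eq : ∀ β, len ≤ β → val β = false

namespace BSeq

/-- The (strict) initial-segment relation `◁` on `2^{<λ}`. -/
def Lt {lam : Cardinal.{0}} (η ν : BSeq lam) : Prop :=
  η.len < ν.len ∧ ∀ β, β < η.len → η.val β = ν.val β

/-- `η` has successor length. -/
def SuccLen {lam : Cardinal.{0}} (η : BSeq lam) : Prop :=
  ∃ γ : Ordinal.{0}, η.len = γ + 1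

end BSeq

/-- For a branch `f ∈ 2^λ` (represented as a boolean function on ordinals) and `γ < λ`,
the restriction `f ↾ (γ+1)`, an element of `2^{<λ}` of successor length. -/
noncomputable def branchRestrict (lam : Cardinal.{0}) (hlam : ℵ₀ ≤ lam)
    (f : Ordinal.{0} → Bool) (γ : Ordinal.{0}) (hγ : γ < lam.ord) : BSeq lam where
  len := γ + 1
  len_lt := by
    have := (Cardinal.isSuccLimit_ord hlam).succ_lt hγ
    simpa [Order.succ_eq_add_one] using this
  val := fun β => if β < γ + 1 then f β else false
  val_eq := by
    intro β h
    rw [if_neg (not_lt.2 h)]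

/-- `φ(x̄, ȳ)` exemplifies SOP₂'' in the structure `M`: for some `n` and some infinite
cardinal `λ` there is a family `⟨ā_η̄⟩` indexed by `◁`-increasing `n`-tuples of elements of
`2^{<λ}` of successor length such that:
(a) for every branch `f ∈ 2^λ`, the set
    `{φ(x̄, ā_{⟨f↾(α₀+1),…,f↾(α_{n−1}+1)⟩}) : α₀ < … < α_{n−1} < λ}` is consistent;
(b) for every large enough `m`, whenever `h` is a one-to-one map from `m^{≤n}` into `2^{<λ}`
    preserving `◁` and incomparability, the set
    `{φ(x̄, ā_{⟨h(η↾1),…,h(η↾n)⟩}) : η ∈ m^n}` is inconsistent. -/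
def ExemplifiesSOP2pp {L : FirstOrder.Language.{0, 0}} {mx : ℕ} {β : Type}
    (φ : L.Formula (Fin mx ⊕ β)) (M : Type*) [L.Structure M] : Prop :=
  ∃ (n : ℕ) (lam : Cardinal.{0}) (hlam : ℵ₀ ≤ lam)
    (a : (Fin n → BSeq lam) → β → M),
    (∀ f : Ordinal.{0} → Bool, ∃ e : Fin mx → M,
      ∀ (α : Fin n → Ordinal.{0}) (hα : ∀ i, α i < lam.ord), StrictMono α →
        φ.Realize (Sum.elim e (a fun i => branchRestrict lam hlam f (α i) (hα i)))) ∧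
    (∃ m₀ : ℕ, ∀ m : ℕ, m₀ ≤ m →
      ∀ h : {l : List (Fin m) // l.length ≤ n} → BSeq lam,
        Function.Injective h →
        (∀ l₁ l₂ : {l : List (Fin m) // l.length ≤ n},
            l₁.1 <+: l₂.1 → l₁.1 ≠ l₂.1 → (h l₁).Lt (h l₂)) →
        (∀ l₁ l₂ : {l : List (Fin m) // l.length ≤ n},
            ¬ l₁.1 <+: l₂.1 → ¬ l₂.1 <+: l₁.1 →
            ¬ (h l₁).Lt (h l₂) ∧ ¬ (h l₂).Lt (h l₁) ∧ h l₁ ≠ h l₂) →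
        ¬ ∃ e : Fin mx → M, ∀ η : Fin n → Fin m,
            φ.Realize (Sum.elim e (a fun ℓ =>
              h ⟨(List.ofFn η).take (ℓ.1 + 1), by
                  rw [List.length_take, List.length_ofFn]
                  exact min_le_right _ _⟩)))

/-- The restriction `ρ ↾ k` of an infinite branch `ρ ∈ 2^ω` to a finite sequence. -/
def restrict (ρ : ℕ → Bool) (k : ℕ) : List Bool :=
  List.ofFn fun i : Fin k => ρ i

/-- `φ(x̄, ȳ)` exemplifies SOP₂ in the structure `M`. -/
def ExemplifiesSOP2 {L : FirstOrder.Language.{0, 0}} {mx : ℕ} {β : Type}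
    (φ : L.Formula (Fin mx ⊕ β)) (M : Type*) [L.Structure M] : Prop :=
  ∃ a : List Bool → β → M,
    (∀ ρ : ℕ → Bool, ∃ e : Fin mx → M, ∀ k : ℕ,
        φ.Realize (Sum.elim e (a (restrict ρ k)))) ∧
    ∀ η ν : List Bool, ¬ η <+: ν → ¬ ν <+: η →
      ¬ ∃ e : Fin mx → M,
          φ.Realize (Sum.elim e (a η)) ∧ φ.Realize (Sum.elim e (a ν))

namespace BSeq

theorem ext {lam : Cardinal.{0}} {η ν : BSeq lam} (hlen : η.len = ν.len)
    (hval : ∀ β < η.len, η.val β = ν.val β) : η = ν := by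
  obtain ⟨l, hl, v, hv⟩ := η
  obtain ⟨l', hl', v', hv'⟩ := ν
  dsimp only at hlen hval
  subst hlen
  congr 1
  funext β
  rcases lt_or_ge β l with hβ | hβ
  · exact hval β hβ
  · rw [hv β hβ, hv' β hβ]

theorem exists_len_eq_natCast (η : BSeq ℵ₀) : ∃ k : ℕ, η.len = k :=
  Ordinal.lt_omega0.1 (Cardinal.ord_aleph0 ▸ η.len_lt)

noncomputable def natLen (η : BSeq ℵ₀) : ℕ :=
  η.exists_len_eq_natCast.choose

theorem len_eq_natLen (η : BSeq ℵ₀) : η.len = η.natLen :=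
  η.exists_len_eq_natCast.choose_spec

noncomputable def toList (η : BSeq ℵ₀) : List Bool :=
  List.ofFn fun i : Fin η.natLen => η.val i

@[simp]
theorem length_toList (η : BSeq ℵ₀) : η.toList.length = η.natLen :=
  List.length_ofFn

@[simp]
theorem getElem_toList (η : BSeq ℵ₀) (i : ℕ) (hi : i < η.toList.length) :
    η.toList[i] = η.val i :=
  List.getElem_ofFn ..

theorem val_eq_of_toList_prefix {η ν : BSeq ℵ₀} (h : η.toList <+: ν.toList) {β : Ordinal}
    (hβ : β < η.len) : η.val β = ν.val β := by
  rw [len_eq_natLen] at hβ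
  obtain ⟨i, rfl⟩ := Ordinal.lt_omega0.1 (hβ.trans (Ordinal.natCast_lt_omega0 _))
  have hi : i < η.toList.length := by simpa using hβ
  simpa using h.getElem hi

theorem eq_or_lt_of_toList_prefix {η ν : BSeq ℵ₀} (h : η.toList <+: ν.toList) :
    η = ν ∨ η.Lt ν := by
  have hlen := h.length_le
  simp only [length_toList] at hlen
  rcases hlen.eq_or_lt with hlen | hlen
  · exact .inl (ext (by rw [len_eq_natLen, len_eq_natLen, hlen])
      fun _ => val_eq_of_toList_prefix h)
  · exact .inr ⟨by rw [len_eq_natLen, len_eq_natLen]; exact_mod_cast hlen,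
      fun _ => val_eq_of_toList_prefix h⟩

theorem not_toList_prefix {η ν : BSeq ℵ₀} (hne : η ≠ ν) (hlt : ¬ η.Lt ν) :
    ¬ η.toList <+: ν.toList :=
  fun h => (eq_or_lt_of_toList_prefix h).elim hne hlt

end BSeq

theorem exists_toList_branchRestrict_eq_restrict (hlam : ℵ₀ ≤ ℵ₀) (f : Ordinal.{0} → Bool)
    (γ : Ordinal.{0}) (hγ : γ < (ℵ₀ : Cardinal).ord) :
    ∃ k : ℕ, (branchRestrict ℵ₀ hlam f γ hγ).toList = restrict (fun n => f n) (k + 1) := by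
  obtain ⟨k, rfl⟩ := Ordinal.lt_omega0.1 (Cardinal.ord_aleph0 ▸ hγ)
  have hlen : (branchRestrict ℵ₀ hlam f k hγ).natLen = k + 1 := by
    have : ((branchRestrict ℵ₀ hlam f k hγ).natLen : Ordinal) = (k + 1 : ℕ) := by
      rw [← BSeq.len_eq_natLen]; push_cast; rfl
    exact_mod_cast this
  refine ⟨k, List.ext_getElem (by simp [hlen, restrict]) fun i hi _ => ?_⟩
  have hik : (i : Ordinal) < k + 1 := by simp_all
  simp only [BSeq.getElem_toList, restrict, List.getElem_ofFn]
  exact if_pos hik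

/-- If the formula `ϑ(x̄,ȳ)` exemplifies SOP₂ in `T` (i.e. in the monster
model `M`), then `ϑ(x̄,ȳ)` exemplifies SOP₂'' in `T`. -/
theorem SOP2pp_of_SOP2 {L : FirstOrder.Language.{0, 0}} {mx my : ℕ}
    (ϑ : L.Formula (Fin mx ⊕ Fin my)) (M : Type*) [L.Structure M]
    (h : ExemplifiesSOP2 ϑ M) : ExemplifiesSOP2pp ϑ M := by
  obtain ⟨a, hbranch, hincomp⟩ := h
  refine ⟨1, ℵ₀, le_rfl, fun η => a (η 0).toList, fun f => ?_, 2, fun m hm t _ _ ht => ?_⟩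
  · obtain ⟨e, he⟩ := hbranch fun n => f n
    refine ⟨e, fun α hα _ => ?_⟩
    obtain ⟨k, hk⟩ := exists_toList_branchRestrict_eq_restrict le_rfl f (α 0) (hα 0)
    simpa only [hk] using he (k + 1)
  · rintro ⟨e, he⟩
    let i₀ : Fin m := ⟨0, by omega⟩
    let i₁ : Fin m := ⟨1, by omega⟩
    let l₀ : {l : List (Fin m) // l.length ≤ 1} := ⟨[i₀], le_rfl⟩
    let l₁ : {l : List (Fin m) // l.length ≤ 1} := ⟨[i₁], le_rfl⟩
    obtain ⟨h01, h10, hne⟩ := ht l₀ l₁ (by simp [l₀, l₁, i₀, i₁]) (by simp [l₀, l₁, i₀, i₁])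
    exact hincomp _ _ (BSeq.not_toList_prefix hne h01) (BSeq.not_toList_prefix (Ne.symm hne) h10)
      ⟨e, he fun _ => i₀, he fun _ => i₁⟩

end SopPaper
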